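/- On ℝ⁵ with coordinates (x,y,z,a,b), let Z₁ = ∂x + a∂z, Z₂ = ∂y + b∂z, Z₃ = −3∂b, Z₄ = ∂a, and define the attacking-mode control fields Y₁ = Z₃, Y₂ = Z₄, Y₃ = 3Z₁ + Z₃, Y₄ = Z₂ + Z₄. Then: (i) each Yᵢ is annihilated by ω⁰ = dz − a dx − b dy and is null for the metric g = 2(dx da + dy db), i.e. g(Yᵢ(p), Yᵢ(p)) = 0 at every p ∈ ℝ⁵; (ii) the Lie bracket satisfies [Y₂, Y₃] = 3∂z; (iii) at every point p ∈ ℝ⁵ the five vectors Y₁(p), Y₂(p), Y₃(p), Y₄(p), ∂z(p) form a basis of ℝ⁵. In particular the family {Y₁, Y₂, Y₃, Y₄} is bracket generating at every point of ℝ⁵. -/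

import Mathlib

open Matrix

noncomputable section

/-- Points of `ℝ⁵` with coordinates `(x,y,z,a,b) = (p 0, p 1, p 2, p 3, p 4)`. -/
abbrev Pt := Fin 5 → ℝ

/-- Vector fields on `ℝ⁵`. -/
abbrev VF := Pt → Pt

/-- Lie bracket of vector fields: `[V,W](p) = (DW)_p(V(p)) − (DV)_p(W(p))`. -/
def lieBracket (V W : VF) : VF := fun p => fderiv ℝ W p (V p) - fderiv ℝ V p (W p)

/-- `Z₁ = ∂x + a∂z`. -/
def Z1 : VF := fun p => ![1, 0, p 3, 0, 0]
/-- `Z₂ = ∂y + b∂z`. -/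
def Z2 : VF := fun p => ![0, 1, p 4, 0, 0]
/-- `Z₃ = −3∂b`. -/
def Z3 : VF := fun _ => ![0, 0, 0, 0, -3]
/-- `Z₄ = ∂a`. -/
def Z4 : VF := fun _ => ![0, 0, 0, 1, 0]

/-- The attacking-mode control fields. -/
def Y1 : VF := Z3
def Y2 : VF := Z4
def Y3 : VF := fun p => (3 : ℝ) • Z1 p + Z3 p
def Y4 : VF := fun p => Z2 p + Z4 p

/-- Components of the contact form `ω⁰ = dz − a dx − b dy`. -/
def ω0 : Pt → Pt := fun p => ![-p 3, -p 4, 1, 0, 0]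

/-- The attacking-mode metric `g = 2(dx da + dy db)` evaluated on a pair of vectors. -/
def gA (v w : Fin 5 → ℝ) : ℝ := v 0 * w 3 + v 3 * w 0 + v 1 * w 4 + v 4 * w 1

/-! `Y₂ = ∂a` is constant and `Y₃ = 3∂x − 3∂b + 3a∂z` is affine, so `[Y₂, Y₃]` is the derivative
of `Y₃` along `∂a`, namely `3∂z`. In coordinates the vectors `Y₁, …, Y₄, ∂z` form a triangular
system with nonzero pivots, hence a basis of `ℝ⁵`. -/

lemma Y3_apply (p : Pt) : Y3 p = ![3, 0, 3 * p 3, 0, -3] := by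
  funext i
  fin_cases i <;> simp [Y3, Z1, Z3]

lemma Y4_apply (p : Pt) : Y4 p = ![0, 1, p 4, 1, 0] := by
  funext i
  fin_cases i <;> simp [Y4, Z2, Z4]

lemma lieBracket_const_affine (v c : Pt) (ℓ : Pt →L[ℝ] Pt) :
    lieBracket (fun _ => v) (fun p => c + ℓ p) = fun _ => ℓ v := by
  funext p
  simp [lieBracket, (ℓ.hasFDerivAt.const_add c).fderiv]

lemma Y3_eq_const_add_linear :
    Y3 = fun p => ![3, 0, 0, 0, -3] +
      (ContinuousLinearMap.proj 3 : Pt →L[ℝ] ℝ).smulRight ![0, 0, 3, 0, 0] p := by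
  funext p i
  fin_cases i <;> simp [Y3_apply, mul_comm]

lemma lieBracket_Y2_Y3 : lieBracket Y2 Y3 = fun _ => ![0, 0, 3, 0, 0] := by
  rw [Y3_eq_const_add_linear, show Y2 = fun _ => ![0, 0, 0, 1, 0] from rfl,
    lieBracket_const_affine]
  funext _ i
  fin_cases i <;> simp

lemma linearIndependent_attacking_frame (p : Pt) :
    LinearIndependent ℝ ![Y1 p, Y2 p, Y3 p, Y4 p, ![0, 0, 1, 0, 0]] := by
  rw [Fintype.linearIndependent_iff]
  intro c hc
  have hx := congrFun hc 0
  have hy := congrFun hc 1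
  have hz := congrFun hc 2
  have ha := congrFun hc 3
  have hb := congrFun hc 4
  simp [Fin.sum_univ_five, Y1, Y2, Y3_apply, Y4_apply, Z3, Z4] at hx hy hz ha hb
  simp only [hx, hy, zero_mul, zero_add] at hz
  intro i
  fin_cases i <;> simp <;> linarith

/-- The attacking-mode control fields `Y₁ = Z₃`, `Y₂ = Z₄`, `Y₃ = 3Z₁+Z₃`,
`Y₄ = Z₂+Z₄` are tangent to the contact distribution and null for `g`;
`[Y₂,Y₃] = 3∂z`; and at every point `Y₁,Y₂,Y₃,Y₄,∂z` form a basis of `ℝ⁵`: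
the family `{Y₁,…,Y₄}` is bracket generating. -/
theorem attacking_mode_bracket_generating :
    (∀ p : Pt, ω0 p ⬝ᵥ Y1 p = 0 ∧ ω0 p ⬝ᵥ Y2 p = 0 ∧ ω0 p ⬝ᵥ Y3 p = 0 ∧ ω0 p ⬝ᵥ Y4 p = 0) ∧
    (∀ p : Pt, gA (Y1 p) (Y1 p) = 0 ∧ gA (Y2 p) (Y2 p) = 0 ∧
      gA (Y3 p) (Y3 p) = 0 ∧ gA (Y4 p) (Y4 p) = 0) ∧
    lieBracket Y2 Y3 = (fun _ => ![0, 0, 3, 0, 0]) ∧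
    (∀ p : Pt,
      LinearIndependent ℝ ![Y1 p, Y2 p, Y3 p, Y4 p, ![0, 0, 1, 0, 0]] ∧
      Submodule.span ℝ
        ({Y1 p, Y2 p, Y3 p, Y4 p, ![0, 0, 1, 0, 0]} : Set (Fin 5 → ℝ)) = ⊤) := by
  refine ⟨fun p => ?_, fun p => ?_, lieBracket_Y2_Y3, fun p => ?_⟩
  · simp [ω0, Y1, Y2, Y3_apply, Y4_apply, Z3, Z4, dotProduct, Fin.sum_univ_five]
    ring
  · simp [gA, Y1, Y2, Y3_apply, Y4_apply, Z3, Z4]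
  · have hli := linearIndependent_attacking_frame p
    refine ⟨hli, ?_⟩
    simpa only [Matrix.range_cons, Matrix.range_empty, Set.union_empty, Set.singleton_union]
      using hli.span_eq_top_of_card_eq_finrank (by simp)
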